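/- For all natural numbers n and i with 0 ≤ i ≤ n, ∑_{k=i}^{n} 2^{n-k} · s(n,k) · S(k,i) = b(n,i), where s(n,k) are the signed Stirling numbers of the first kind, S(k,i) are the Stirling numbers of the second kind, and b(n,i) are the Bessel numbers of the first kind. -/

import Mathlib

/-- The signed Stirling numbers of the first kind `s(n,k)`, defined as the
coefficients in the falling factorial expansion
`x(x-1)⋯(x-n+1) = ∑_{k=0}^{n} s(n,k) xᵏ`. -/
noncomputable def stirlingFirst (n k : ℕ) : ℤ :=
  (descPochhammer ℤ n).coeff k

/-- The Stirling numbers of the second kind `S(n,k)`, counting the partitions of an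
`n`-element set into `k` nonempty blocks, defined via the standard recurrence
`S(n+1,k+1) = (k+1)·S(n,k+1) + S(n,k)` with `S(0,0) = 1`. -/
def stirlingSecond : ℕ → ℕ → ℕ
  | 0, 0 => 1
  | 0, _ + 1 => 0
  | _ + 1, 0 => 0
  | n + 1, k + 1 => (k + 1) * stirlingSecond n (k + 1) + stirlingSecond n k

/-- The Bessel numbers of the first kind:
`b(n,k) = (-1)^{n-k} (2n-k-1)! / (2^{n-k} (k-1)! (n-k)!)` for `1 ≤ k ≤ n`,
`b(0,0) = 1`, `b(n,0) = 0` for `n ≥ 1`, and `b(n,k) = 0` for `n < k`. -/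
def besselFirst (n k : ℕ) : ℚ :=
  if k = 0 then (if n = 0 then 1 else 0)
  else if k ≤ n then
    (-1) ^ (n - k) * (Nat.factorial (2 * n - k - 1)) /
      (2 ^ (n - k) * (Nat.factorial (k - 1)) * (Nat.factorial (n - k)))
  else 0

/-!
Both sides satisfy `b(n+1, j+1) = b(n, j) + (j + 1 - 2n) b(n, j+1)` and agree for `n = 0`
and for `i = 0`. For the left side: `2^(n-k) s(n,k)` is the coefficient of `x^k` in
`x (x - 2) ⋯ (x - 2n + 2)` and `x^k = ∑ᵢ S(k,i) (x)ᵢ`, so the left side is the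
coefficient of `(x)ᵢ` in that product, and `(x)ᵢ (x - 2n) = (x)ᵢ₊₁ + (i - 2n) (x)ᵢ`.
For the right side the recurrence is an identity between factorials.
-/
open Finset
open scoped Nat

theorem stirlingFirst_succ_succ (n k : ℕ) :
    stirlingFirst (n + 1) (k + 1) = stirlingFirst n k - n * stirlingFirst n (k + 1) := by
  rw [stirlingFirst, descPochhammer_succ_right, ← Polynomial.C_eq_natCast, mul_sub,
    Polynomial.coeff_sub, Polynomial.coeff_mul_X, Polynomial.coeff_mul_C, mul_comm]
  rfl

theorem stirlingFirst_succ_zero (n : ℕ) : stirlingFirst (n + 1) 0 = 0 := by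
  rw [stirlingFirst, Polynomial.coeff_zero_eq_eval_zero]
  exact descPochhammer_ne_zero_eval_zero ℤ n.succ_ne_zero

theorem stirlingFirst_eq_zero_of_lt {n k : ℕ} (h : n < k) : stirlingFirst n k = 0 :=
  Polynomial.coeff_eq_zero_of_natDegree_lt (by rwa [descPochhammer_natDegree])

theorem stirlingSecond_eq_nat_stirlingSecond : stirlingSecond = Nat.stirlingSecond := by
  funext n k
  induction n generalizing k with
  | zero => cases k <;> rfl
  | succ n ih => cases k <;> simp [stirlingSecond, Nat.stirlingSecond_succ_succ, ih]

noncomputable def scaledStirlingFirst (n k : ℕ) : ℚ :=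
  2 ^ (n - k) * stirlingFirst n k

theorem scaledStirlingFirst_succ_succ (n k : ℕ) :
    scaledStirlingFirst (n + 1) (k + 1) =
      scaledStirlingFirst n k - 2 * n * scaledStirlingFirst n (k + 1) := by
  simp only [scaledStirlingFirst, stirlingFirst_succ_succ, Nat.add_sub_add_right]
  rcases lt_or_ge k n with hk | hk
  · obtain ⟨d, rfl⟩ := Nat.exists_eq_add_of_lt hk
    rw [show k + d + 1 - k = d + 1 by omega, show k + d + 1 - (k + 1) = d by omega]
    push_cast
    ring
  · simp [stirlingFirst_eq_zero_of_lt (show n < k + 1 by omega)]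

theorem scaledStirlingFirst_succ_zero (n : ℕ) : scaledStirlingFirst (n + 1) 0 = 0 := by
  simp [scaledStirlingFirst, stirlingFirst_succ_zero]

theorem scaledStirlingFirst_eq_zero_of_lt {n k : ℕ} (h : n < k) :
    scaledStirlingFirst n k = 0 := by
  simp [scaledStirlingFirst, stirlingFirst_eq_zero_of_lt h]

noncomputable def stirlingSum (n i : ℕ) : ℚ :=
  ∑ k ∈ range (n + 1), scaledStirlingFirst n k * Nat.stirlingSecond k i

theorem sum_range_eq_stirlingSum {n N : ℕ} (hN : n < N) (i : ℕ) :
    ∑ k ∈ range N, scaledStirlingFirst n k * Nat.stirlingSecond k i = stirlingSum n i := by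
  refine (sum_subset (range_subset_range.2 hN) fun k _ hk => ?_).symm
  rw [scaledStirlingFirst_eq_zero_of_lt (by simpa using hk), zero_mul]

theorem stirlingSum_zero (i : ℕ) : stirlingSum 0 i = Nat.stirlingSecond 0 i := by
  simp [stirlingSum, scaledStirlingFirst, stirlingFirst]

theorem stirlingSum_succ_zero (n : ℕ) : stirlingSum (n + 1) 0 = 0 := by
  refine sum_eq_zero fun k _ => ?_
  cases k with
  | zero => rw [scaledStirlingFirst_succ_zero, zero_mul]
  | succ k => simp

theorem stirlingSum_succ_succ (n j : ℕ) :
    stirlingSum (n + 1) (j + 1) = stirlingSum n j + (j + 1 - 2 * n) * stirlingSum n (j + 1) := by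
  have hshift : ∑ k ∈ range (n + 1), scaledStirlingFirst n (k + 1) *
      Nat.stirlingSecond (k + 1) (j + 1) = stirlingSum n (j + 1) := by
    rw [← sum_range_eq_stirlingSum (N := n + 2) (by omega), sum_range_succ' _ (n + 1)]
    simp
  have hterm : ∀ k, scaledStirlingFirst (n + 1) (k + 1) * Nat.stirlingSecond (k + 1) (j + 1) =
      scaledStirlingFirst n k * Nat.stirlingSecond k j +
        (j + 1) * (scaledStirlingFirst n k * Nat.stirlingSecond k (j + 1)) -
        2 * n * (scaledStirlingFirst n (k + 1) * Nat.stirlingSecond (k + 1) (j + 1)) := by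
    intro k
    rw [scaledStirlingFirst_succ_succ, Nat.stirlingSecond_succ_succ]
    push_cast
    ring
  rw [stirlingSum, sum_range_succ', scaledStirlingFirst_succ_zero, zero_mul, add_zero]
  simp only [hterm, sum_sub_distrib, sum_add_distrib, ← mul_sum, hshift]
  rw [stirlingSum, stirlingSum]
  ring

theorem besselFirst_eq_zero_of_lt {n k : ℕ} (h : n < k) : besselFirst n k = 0 := by
  simp [besselFirst, Nat.not_le.2 h, show k ≠ 0 by omega]

theorem besselFirst_succ_zero (n : ℕ) : besselFirst (n + 1) 0 = 0 := rfl

theorem besselFirst_self (n : ℕ) : besselFirst n n = 1 := by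
  cases n with
  | zero => rfl
  | succ n =>
    rw [besselFirst, if_neg n.succ_ne_zero, if_pos le_rfl,
      show 2 * (n + 1) - (n + 1) - 1 = n by omega]
    simp [Nat.factorial_ne_zero]

theorem besselFirst_add_add_one (j d : ℕ) :
    besselFirst (j + d + 1) (j + 1) = (-1) ^ d * (j + 2 * d)! / (2 ^ d * j ! * d !) := by
  rw [besselFirst, if_neg j.succ_ne_zero, if_pos (by omega),
    show j + d + 1 - (j + 1) = d by omega, show 2 * (j + d + 1) - (j + 1) - 1 = j + 2 * d by omega,
    Nat.add_sub_cancel]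

theorem besselFirst_succ_succ (n j : ℕ) :
    besselFirst (n + 1) (j + 1) = besselFirst n j + (j + 1 - 2 * n) * besselFirst n (j + 1) := by
  obtain h | ⟨d, rfl⟩ : n < j ∨ ∃ d, n = j + d :=
    (lt_or_ge n j).imp_right Nat.exists_eq_add_of_le
  · simp [besselFirst_eq_zero_of_lt, h, Nat.lt_succ_of_lt h]
  cases d with
  | zero => simp [besselFirst_self, besselFirst_eq_zero_of_lt]
  | succ e =>
    cases j with
    | zero =>
      have h₁ := besselFirst_add_add_one 0 (e + 1)
      have h₂ := besselFirst_add_add_one 0 e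
      simp only [zero_add] at h₁ h₂ ⊢
      rw [h₁, h₂, besselFirst_succ_zero, show 2 * (e + 1) = 2 * e + 1 + 1 by ring]
      simp only [Nat.factorial_succ]
      push_cast
      field_simp
      ring
    | succ m =>
      have h₁ := besselFirst_add_add_one (m + 1) (e + 1)
      have h₂ := besselFirst_add_add_one m (e + 1)
      have h₃ := besselFirst_add_add_one (m + 1) e
      rw [add_right_comm m] at h₂
      rw [add_assoc (m + 1) e 1] at h₃
      rw [h₁, h₂, h₃, show m + 1 + 2 * (e + 1) = m + 2 * e + 1 + 1 + 1 by ring,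
        show m + 2 * (e + 1) = m + 2 * e + 1 + 1 by ring,
        show m + 1 + 2 * e = m + 2 * e + 1 by ring]
      simp only [Nat.factorial_succ]
      push_cast
      field_simp
      ring

theorem stirlingSum_eq_besselFirst (n i : ℕ) : stirlingSum n i = besselFirst n i := by
  induction n generalizing i with
  | zero => cases i <;> simp [stirlingSum_zero, besselFirst]
  | succ n ih =>
    cases i with
    | zero => rw [stirlingSum_succ_zero, besselFirst_succ_zero]
    | succ j => rw [stirlingSum_succ_succ, besselFirst_succ_succ, ih, ih]

theorem stmt2_general (n i : ℕ) :
    ∑ k ∈ Finset.Icc i n, 2 ^ (n - k) * (stirlingFirst n k : ℚ) * (stirlingSecond k i : ℚ) =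
      besselFirst n i := by
  rw [← stirlingSum_eq_besselFirst, stirlingSum, stirlingSecond_eq_nat_stirlingSecond]
  refine sum_subset (fun k hk => ?_) fun k hkn hki => ?_
  · simp only [mem_Icc, mem_range] at hk ⊢
    omega
  · have hlt : k < i := by simp only [mem_Icc, mem_range] at hkn hki; omega
    simp [Nat.stirlingSecond_eq_zero_of_lt hlt]

theorem stmt2 (n i : ℕ) (h : i ≤ n) :
    ∑ k ∈ Finset.Icc i n, 2 ^ (n - k) * (stirlingFirst n k : ℚ) * (stirlingSecond k i : ℚ) =
      besselFirst n i :=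
  stmt2_general n i
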